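/- Let q = 2^t, n = 2m, and let U₁, …, U_A be elements of a partial spread of 𝔽₂ⁿ. Let k₁, …, k_A ∈ {1, …, q−1} and ρ ∈ {0, …, q−1} satisfy Σ_{i=1}^{A} ζ^{k_i} = A − (2^m + 1) + ζ^{ρ}, where ζ = e^{2πi/2^t}. Define f : 𝔽₂ⁿ → ℤ_q by f(0) = ρ, f(x) = k_i if x ∈ U_i and x ≠ 0, and f(x) = 0 if x ∈ 𝔽₂ⁿ ∖ ⋃_{k=1}^{A} U_k. Then f is a gbent function, and its dual f* is given by f*(0) = ρ, f*(x) = k_i if x ∈ U_i^⊥ and x ≠ 0, and f*(x) = 0 if x ∈ 𝔽₂ⁿ ∖ ⋃_{k=1}^{A} U_k^⊥. -/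

import Mathlib

open scoped BigOperators

/-- `ζ_q = e^{2πi/q}`. -/
noncomputable def zeta (q : ℕ) : ℂ := Complex.exp (2 * Real.pi * Complex.I / q)

/-- The standard inner product `⟨u,x⟩ = Σᵢ uᵢxᵢ` on `𝔽₂ⁿ`. -/
def ip {n : ℕ} (u x : Fin n → ZMod 2) : ZMod 2 := ∑ i, u i * x i

/-- The generalized Walsh–Hadamard transform
`H_f(u) = Σ_x ζ_q^{f(x)} (−1)^{⟨u,x⟩}` of `f : 𝔽₂ⁿ → ℤ_q`. -/
noncomputable def gWHT {n q : ℕ} (f : (Fin n → ZMod 2) → ZMod q) (u : Fin n → ZMod 2) : ℂ :=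
  ∑ x : Fin n → ZMod 2, zeta q ^ (f x).val * (-1 : ℂ) ^ (ip u x).val

/-- `f` is gbent if `|H_f(u)| = 2^{n/2}` for all `u`. -/
def IsGbent {n q : ℕ} (f : (Fin n → ZMod 2) → ZMod q) : Prop :=
  ∀ u, ‖gWHT f u‖ = (2 : ℝ) ^ ((n : ℝ) / 2)

/-- `g` is the dual of `f`: `H_f(u) = 2^{n/2} ζ_q^{g(u)}` for all `u`. -/
def IsDualOf {n q : ℕ} (g f : (Fin n → ZMod 2) → ZMod q) : Prop :=
  ∀ u, gWHT f u = ((2 : ℝ) ^ ((n : ℝ) / 2) : ℝ) * zeta q ^ (g u).val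

/-- `f` is a regular gbent function:
`H_f(u) = 2^{n/2} ζ_q^{j_u}` for some `j_u ∈ ℤ_q`, for every `u`. -/
def IsRegularGbent {n q : ℕ} (f : (Fin n → ZMod 2) → ZMod q) : Prop :=
  IsGbent f ∧ ∀ u, ∃ j : ZMod q, gWHT f u = ((2 : ℝ) ^ ((n : ℝ) / 2) : ℝ) * zeta q ^ j.val

/-- The orthogonal complement of a subspace `U ⊆ 𝔽₂ⁿ` w.r.t. `⟨·,·⟩`. -/
def orthComp {n : ℕ} (U : Submodule (ZMod 2) (Fin n → ZMod 2)) : Set (Fin n → ZMod 2) :=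
  {u | ∀ x ∈ U, ip u x = 0}

/-- `F : 𝔽₂ⁿ → ℤ_q^m` is vectorial gbent if every component function
`c·F`, `c ≠ 0`, is gbent. -/
def IsVectorialGbent {n q m : ℕ} (F : (Fin n → ZMod 2) → Fin m → ZMod q) : Prop :=
  ∀ c : Fin m → ZMod q, c ≠ 0 → IsGbent (fun x => ∑ j, c j * F x j)

/-! Using the constraint on the `k_i`, `ζ^f = 1 + Σ_i (ζ^{k_i} - 1) 1_{U_i} + 2^m 1_{0}`. The Walsh
transform of `1` is `2^{2m} 1_{0}`, that of `1_{0}` is `1`, and that of the indicator of an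
`m`-dimensional subspace `U` is `2^m 1_{U^⊥}`, so
`H_f = 2^m (1 + Σ_i (ζ^{k_i} - 1) 1_{U_i^⊥} + 2^m 1_{0})`. Since `U_i ⊕ U_j` is the whole space, the
`U_i^⊥` again meet pairwise only in `0`, so the same decomposition, read backwards for the dual
partial spread, identifies the bracket with `ζ^{f*}`. -/

section Walsh

variable {n : ℕ}

lemma ip_add_right (u x y : Fin n → ZMod 2) : ip u (x + y) = ip u x + ip u y :=
  dotProduct_add u x y

lemma ip_single_one (u : Fin n → ZMod 2) (i : Fin n) : ip u (Pi.single i 1) = u i := by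
  simp [ip, Pi.single_apply]

lemma neg_one_pow_val_add (a b : ZMod 2) :
    (-1 : ℂ) ^ (a + b).val = (-1) ^ a.val * (-1) ^ b.val := by
  rw [ZMod.val_add, ← neg_one_pow_eq_pow_mod_two, pow_add]

lemma neg_one_pow_val_eq_one_iff (a : ZMod 2) : (-1 : ℂ) ^ a.val = 1 ↔ a = 0 := by
  rw [neg_one_pow_eq_one_iff_even (by norm_num), ← ZMod.natCast_eq_zero_iff_even,
    ZMod.natCast_zmod_val]

def walshChar (u : Fin n → ZMod 2) : AddChar (Fin n → ZMod 2) ℂ where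
  toFun x := (-1) ^ (ip u x).val
  map_zero_eq_one' := by simp [ip]
  map_add_eq_mul' x y := by rw [ip_add_right, neg_one_pow_val_add]

lemma walshChar_apply (u x : Fin n → ZMod 2) : walshChar u x = (-1) ^ (ip u x).val :=
  rfl

lemma gWHT_eq_sum_walshChar {q : ℕ} (f : (Fin n → ZMod 2) → ZMod q) (u : Fin n → ZMod 2) :
    gWHT f u = ∑ x, zeta q ^ (f x).val * walshChar u x :=
  rfl

lemma walshChar_eq_zero_iff (u : Fin n → ZMod 2) : walshChar u = 0 ↔ u = 0 := by
  refine ⟨fun h => funext fun i => ?_, fun h => ?_⟩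
  · rw [Pi.zero_apply, ← ip_single_one u i, ← neg_one_pow_val_eq_one_iff, ← walshChar_apply, h,
      AddChar.zero_apply]
  · ext x
    simp [walshChar_apply, h, ip]

lemma sum_walshChar (u : Fin n → ZMod 2) :
    ∑ x, walshChar u x = if u = 0 then (2 ^ n : ℂ) else 0 := by
  simp [AddChar.sum_eq_ite, walshChar_eq_zero_iff, ZMod.card]

open Classical in
lemma sum_indicator_walshChar (U : Submodule (ZMod 2) (Fin n → ZMod 2)) (u : Fin n → ZMod 2) :
    ∑ x, (U : Set (Fin n → ZMod 2)).indicator (walshChar u) x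
      = if u ∈ orthComp U then (Nat.card U : ℂ) else 0 := by
  let χ := (walshChar u).compAddMonoidHom U.subtype.toAddMonoidHom
  have hχ : χ = 0 ↔ u ∈ orthComp U := by
    simp [χ, AddChar.eq_zero_iff, walshChar_apply, neg_one_pow_val_eq_one_iff, orthComp]
  have hsum : ∑ x, (U : Set (Fin n → ZMod 2)).indicator (walshChar u) x = ∑ x : U, χ x := by
    simp only [Set.indicator_apply, ← Finset.sum_filter]
    exact Finset.sum_subtype _ (by simp) _
  rw [hsum, AddChar.sum_eq_ite, Nat.card_eq_fintype_card]
  simp only [hχ]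

lemma sum_indicator_mul_walshChar (U : Submodule (ZMod 2) (Fin n → ZMod 2)) (c : ℂ)
    (u : Fin n → ZMod 2) :
    ∑ x, (U : Set (Fin n → ZMod 2)).indicator (fun _ => c) x * walshChar u x
      = (orthComp U).indicator (fun _ => c) u * Nat.card U := by
  have hterm : ∀ x, (U : Set (Fin n → ZMod 2)).indicator (fun _ => c) x * walshChar u x
      = c * (U : Set (Fin n → ZMod 2)).indicator (walshChar u) x := by
    intro x
    by_cases hx : x ∈ (U : Set (Fin n → ZMod 2)) <;> simp [hx]
  rw [Finset.sum_congr rfl fun x _ => hterm x, ← Finset.mul_sum, sum_indicator_walshChar]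
  by_cases hu : u ∈ orthComp U <;> simp [hu]

end Walsh

section OrthComp

variable {n : ℕ}

lemma zero_mem_orthComp (U : Submodule (ZMod 2) (Fin n → ZMod 2)) : 0 ∈ orthComp U :=
  fun x _ => by simp [ip]

lemma orthComp_sup (U W : Submodule (ZMod 2) (Fin n → ZMod 2)) :
    orthComp (U ⊔ W) = orthComp U ∩ orthComp W := by
  ext u
  refine ⟨fun h => ⟨fun x hx => h x (Submodule.mem_sup_left hx),
    fun x hx => h x (Submodule.mem_sup_right hx)⟩, fun ⟨hU, hW⟩ x hx => ?_⟩
  obtain ⟨y, hy, z, hz, rfl⟩ := Submodule.mem_sup.mp hx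
  rw [ip_add_right, hU y hy, hW z hz, add_zero]

lemma orthComp_top : orthComp (⊤ : Submodule (ZMod 2) (Fin n → ZMod 2)) = {0} := by
  ext u
  refine ⟨fun h => funext fun i => ?_, fun h x _ => ?_⟩
  · rw [← ip_single_one u i]
    exact h _ Submodule.mem_top
  · simp [Set.mem_singleton_iff.mp h, ip]

lemma orthComp_inter_orthComp_of_disjoint {U W : Submodule (ZMod 2) (Fin n → ZMod 2)}
    (hdim : n ≤ Module.finrank (ZMod 2) U + Module.finrank (ZMod 2) W) (h : Disjoint U W) :
    orthComp U ∩ orthComp W = {0} := by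
  rw [← orthComp_sup, Submodule.eq_top_of_disjoint U W (by simpa using hdim) h, orthComp_top]

end OrthComp

section SpreadFun

variable {ι V : Type*} [Fintype ι] [DecidableEq V]

/-- When the `S i` all contain `x₀` and pairwise meet only in `x₀`, this is the function equal to
`b` at `x₀`, to `a i` on `S i \ {x₀}` and to `1` off `⋃ i, S i`. -/
noncomputable def spreadFun {R : Type*} [CommRing R] (S : ι → Set V) (x₀ : V) (a : ι → R) (b : R)
    (x : V) : R :=
  1 + ∑ i, (S i).indicator (fun _ => a i - 1) x + if x = x₀ then b - 1 - ∑ i, (a i - 1) else 0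

section CommRing

variable {R : Type*} [CommRing R] {S : ι → Set V} {x₀ : V} (a : ι → R) (b : R)

lemma spreadFun_self (hS₀ : ∀ i, x₀ ∈ S i) : spreadFun S x₀ a b x₀ = b := by
  rw [spreadFun, if_pos rfl]
  simp only [Set.indicator_of_mem (hS₀ _)]
  ring

lemma spreadFun_of_mem (hS : Pairwise fun i j => S i ∩ S j ⊆ {x₀}) {i : ι} {x : V}
    (hx : x ∈ S i) (hx₀ : x ≠ x₀) : spreadFun S x₀ a b x = a i := by
  have hxS : ∀ j ≠ i, x ∉ S j := fun j hj hxj => hx₀ (hS hj ⟨hxj, hx⟩)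
  rw [spreadFun, Finset.sum_eq_single i (fun j _ hj => Set.indicator_of_notMem (hxS j hj) _)
    (by simp), Set.indicator_of_mem hx, if_neg hx₀]
  ring

lemma spreadFun_of_notMem {x : V} (hx : x ∉ ⋃ i, S i) (hx₀ : x ≠ x₀) :
    spreadFun S x₀ a b x = 1 := by
  simp only [Set.mem_iUnion, not_exists] at hx
  simp [spreadFun, Set.indicator_of_notMem (hx _), hx₀]

lemma eq_spreadFun (hS₀ : ∀ i, x₀ ∈ S i) (hS : Pairwise fun i j => S i ∩ S j ⊆ {x₀})
    {φ : V → R} (h₀ : φ x₀ = b) (h₁ : ∀ i, ∀ x ∈ S i, x ≠ x₀ → φ x = a i)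
    (h₂ : ∀ x ∉ ⋃ i, S i, φ x = 1) : φ = spreadFun S x₀ a b := by
  funext x
  by_cases hx₀ : x = x₀
  · rw [hx₀, h₀, spreadFun_self a b hS₀]
  by_cases hx : x ∈ ⋃ i, S i
  · obtain ⟨i, hi⟩ := Set.mem_iUnion.mp hx
    rw [h₁ i x hi hx₀, spreadFun_of_mem a b hS hi hx₀]
  · rw [h₂ x hx, spreadFun_of_notMem a b hx hx₀]

end CommRing

lemma norm_spreadFun {R : Type*} [NormedCommRing R] [NormOneClass R] {S : ι → Set V} {x₀ : V}
    (hS₀ : ∀ i, x₀ ∈ S i) (hS : Pairwise fun i j => S i ∩ S j ⊆ {x₀}) {a : ι → R} {b : R}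
    (ha : ∀ i, ‖a i‖ = 1) (hb : ‖b‖ = 1) (x : V) : ‖spreadFun S x₀ a b x‖ = 1 := by
  by_cases hx₀ : x = x₀
  · rwa [hx₀, spreadFun_self a b hS₀]
  by_cases hx : x ∈ ⋃ i, S i
  · obtain ⟨i, hi⟩ := Set.mem_iUnion.mp hx
    rw [spreadFun_of_mem a b hS hi hx₀, ha]
  · rw [spreadFun_of_notMem a b hx hx₀, norm_one]

end SpreadFun

theorem sum_spreadFun_mul_walshChar {ι : Type*} [Fintype ι] {n N : ℕ}
    (U : ι → Submodule (ZMod 2) (Fin n → ZMod 2)) (hU : ∀ i, Nat.card (U i) = N)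
    (hn : 2 ^ n = N ^ 2) (a : ι → ℂ) (b : ℂ)
    (hsum : ∑ i, a i = Fintype.card ι - (N + 1) + b) (u : Fin n → ZMod 2) :
    ∑ x, spreadFun (fun i => (U i : Set (Fin n → ZMod 2))) 0 a b x * walshChar u x
      = N * spreadFun (fun i => orthComp (U i)) 0 a b u := by
  have hc : b - 1 - ∑ i, (a i - 1) = N := by
    rw [Finset.sum_sub_distrib, hsum]
    simp
    ring
  calc ∑ x, spreadFun (fun i => (U i : Set (Fin n → ZMod 2))) 0 a b x * walshChar u x
      = ∑ x, walshChar u x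
        + ∑ i, ∑ x, (U i : Set (Fin n → ZMod 2)).indicator (fun _ => a i - 1) x * walshChar u x
        + ∑ x, (if x = 0 then (N : ℂ) else 0) * walshChar u x := by
        simp only [spreadFun, hc, add_mul, one_mul, Finset.sum_add_distrib, Finset.sum_mul]
        rw [Finset.sum_comm]
    _ = (if u = 0 then (2 ^ n : ℂ) else 0)
        + (∑ i, (orthComp (U i)).indicator (fun _ => a i - 1) u) * N + N := by
        simp [sum_walshChar, sum_indicator_mul_walshChar, hU, Finset.sum_mul]
    _ = N * spreadFun (fun i => orthComp (U i)) 0 a b u := by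
        rw [spreadFun, hc]
        split_ifs
        · have hn' : (2 : ℂ) ^ n = (N : ℂ) ^ 2 := by exact_mod_cast hn
          linear_combination hn'
        · ring

lemma norm_zeta_pow (q j : ℕ) : ‖zeta q ^ j‖ = 1 := by
  have h : 2 * Real.pi * Complex.I / q = ((2 * Real.pi / q : ℝ) : ℂ) * Complex.I := by
    push_cast
    ring
  rw [norm_pow, zeta, h, Complex.norm_exp_ofReal_mul_I, one_pow]

lemma zeta_pow_eq_spreadFun {ι V : Type*} [Fintype ι] [DecidableEq V] {q : ℕ} {S : ι → Set V}
    {x₀ : V} (hS₀ : ∀ i, x₀ ∈ S i) (hS : Pairwise fun i j => S i ∩ S j ⊆ {x₀}) (k : ι → ZMod q)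
    (ρ : ZMod q) {g : V → ZMod q} (h₀ : g x₀ = ρ) (h₁ : ∀ i, ∀ x ∈ S i, x ≠ x₀ → g x = k i)
    (h₂ : ∀ x ∉ ⋃ i, S i, g x = 0) :
    (fun x => zeta q ^ (g x).val)
      = spreadFun S x₀ (fun i => zeta q ^ (k i).val) (zeta q ^ ρ.val) :=
  eq_spreadFun _ _ hS₀ hS (by rw [h₀]) (fun i x hx hx₀ => by rw [h₁ i x hx hx₀])
    (fun x hx => by rw [h₂ x hx, ZMod.val_zero, pow_zero])

lemma two_rpow_two_mul_div_two (m : ℕ) : (2 : ℝ) ^ (((2 * m : ℕ) : ℝ) / 2) = 2 ^ m := by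
  rw [← Real.rpow_natCast]
  congr 1
  push_cast
  ring

theorem stmt6 (t m A : ℕ)
    (U : Fin A → Submodule (ZMod 2) (Fin (2 * m) → ZMod 2))
    (hdim : ∀ i, Module.finrank (ZMod 2) (U i) = m)
    (hint : ∀ i j, i ≠ j → U i ⊓ U j = ⊥)
    (k : Fin A → ZMod (2 ^ t)) (ρ : ZMod (2 ^ t))
    (hcon : ∑ i, zeta (2 ^ t) ^ (k i).val
      = (A : ℂ) - (2 ^ m + 1) + zeta (2 ^ t) ^ ρ.val)
    (f : (Fin (2 * m) → ZMod 2) → ZMod (2 ^ t))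
    (hf0 : f 0 = ρ)
    (hf1 : ∀ i, ∀ x ∈ U i, x ≠ 0 → f x = k i)
    (hf2 : ∀ x, x ∉ ⋃ i, (U i : Set (Fin (2 * m) → ZMod 2)) → f x = 0) :
    IsGbent f ∧
    ∀ g : (Fin (2 * m) → ZMod 2) → ZMod (2 ^ t), g 0 = ρ →
      (∀ i, ∀ x ∈ orthComp (U i), x ≠ 0 → g x = k i) →
      (∀ x, x ∉ ⋃ i, orthComp (U i) → g x = 0) →
      IsDualOf g f := by
  have hspread : Pairwise fun i j => (U i : Set (Fin (2 * m) → ZMod 2)) ∩ U j ⊆ {0} :=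
    fun i j hij x hx => by simpa [hint i j hij] using Submodule.mem_inf.mpr hx
  have horth : Pairwise fun i j => orthComp (U i) ∩ orthComp (U j) ⊆ {0} := fun i j hij =>
    (orthComp_inter_orthComp_of_disjoint (by rw [hdim, hdim]; omega)
      (disjoint_iff.mpr (hint i j hij))).subset
  have hf := zeta_pow_eq_spreadFun (fun i => (U i).zero_mem) hspread k ρ hf0 hf1 hf2
  have hcard : ∀ i, Nat.card (U i) = 2 ^ m := fun i => by
    rw [Module.natCard_eq_pow_finrank (K := ZMod 2), hdim, Nat.card_zmod]
  have hW : ∀ u, gWHT f u = 2 ^ m * spreadFun (fun i => orthComp (U i)) 0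
      (fun i => zeta (2 ^ t) ^ (k i).val) (zeta (2 ^ t) ^ ρ.val) u := fun u => by
    have h := sum_spreadFun_mul_walshChar U hcard (by ring) _ _ (by simpa using hcon) u
    rw [← hf] at h
    exact_mod_cast h
  refine ⟨fun u => ?_, fun g hg0 hg1 hg2 u => ?_⟩
  · rw [hW, norm_mul, norm_spreadFun (fun i => zero_mem_orthComp (U i)) horth
      (fun i => norm_zeta_pow _ _) (norm_zeta_pow _ _), two_rpow_two_mul_div_two]
    simp
  · have hg := zeta_pow_eq_spreadFun (fun i => zero_mem_orthComp (U i)) horth k ρ hg0 hg1 hg2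
    rw [hW, ← hg, two_rpow_two_mul_div_two]
    push_cast
    rfl
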